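/- Let Ω = B(0,1) \ B(0,r₀) ⊂ ℝ² with 0 < r₀ < 1, k a positive integer, and σ > 0. The function u(r,θ) = e^{ikθ}(r^k + c·r^{-k}) with c = (k - σ)/(k + σ) is harmonic on Ω and satisfies the Steklov condition ∂_ν u = σ u on both boundary circles r = 1 and r = r₀ if and only if σ is a root of p_k(σ) = σ² - σ k ((1+r₀)/r₀)((1+r₀^{2k})/(1-r₀^{2k})) + k²/r₀. -/

import Mathlib

/-!
Separating variables, `u = e^{ikθ} R(r)` with `R = r^k + c r^{-k}`, the polar Laplacian of `u` is
`e^{ikθ} (R'' + R'/r - k² R/r²)`, which vanishes because `r^{±k}` solve Euler's equation.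
Since `e^{ikθ} ≠ 0`, the Steklov conditions reduce to `R'(1) = σ R(1)`, i.e. `k (1 - c) = σ (1 + c)`,
which is the choice of `c`, and `-R'(r₀) = σ R(r₀)`. Clearing the denominators
`(k + σ) r₀^{k+1}` turns the latter into `(k - σ)(k - σ r₀) = r₀^{2k} (k + σ)(k + σ r₀)`,
which expands to `r₀ (1 - r₀^{2k}) p_k(σ) = 0`.
-/

open Complex

noncomputable def eulerProfile (n : ℤ) (c : ℂ) (r : ℝ) : ℂ := (r : ℂ) ^ n + c * (r : ℂ) ^ (-n)

lemma hasDerivAt_ofReal_zpow (m : ℤ) {r : ℝ} (hr : r ≠ 0) :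
    HasDerivAt (fun s : ℝ => (s : ℂ) ^ m) (m * (r : ℂ) ^ (m - 1)) r :=
  (hasDerivAt_zpow m (r : ℂ) (Or.inl (ofReal_ne_zero.mpr hr))).comp_ofReal

lemma hasDerivAt_eulerProfile (n : ℤ) (c : ℂ) {r : ℝ} (hr : r ≠ 0) :
    HasDerivAt (eulerProfile n c) (n * ((r : ℂ) ^ (n - 1) - c * (r : ℂ) ^ (-n - 1))) r := by
  refine ((hasDerivAt_ofReal_zpow n hr).add
    ((hasDerivAt_ofReal_zpow (-n) hr).const_mul c)).congr_deriv ?_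
  push_cast; ring

lemma deriv_deriv_eulerProfile (n : ℤ) (c : ℂ) {r : ℝ} (hr : r ≠ 0) :
    deriv (deriv (eulerProfile n c)) r
      = n * ((n - 1) * (r : ℂ) ^ (n - 2) + c * (n + 1) * (r : ℂ) ^ (-n - 2)) := by
  have hderiv : deriv (eulerProfile n c) =ᶠ[nhds r]
      fun s : ℝ => n * ((s : ℂ) ^ (n - 1) - c * (s : ℂ) ^ (-n - 1)) := by
    filter_upwards [eventually_ne_nhds hr] with s hs
    exact (hasDerivAt_eulerProfile n c hs).deriv
  rw [hderiv.deriv_eq]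
  refine (((hasDerivAt_ofReal_zpow (n - 1) hr).sub
    ((hasDerivAt_ofReal_zpow (-n - 1) hr).const_mul c)).const_mul (n : ℂ)).deriv.trans ?_
  rw [show n - 1 - 1 = n - 2 by ring, show -n - 1 - 1 = -n - 2 by ring]
  push_cast; ring

lemma eulerProfile_ode (n : ℤ) (c : ℂ) {r : ℝ} (hr : r ≠ 0) :
    deriv (deriv (eulerProfile n c)) r + 1 / (r : ℂ) * deriv (eulerProfile n c) r
      - (n : ℂ) ^ 2 / (r : ℂ) ^ 2 * eulerProfile n c r = 0 := by
  have hr' : (r : ℂ) ≠ 0 := ofReal_ne_zero.mpr hr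
  rw [deriv_deriv_eulerProfile n c hr, (hasDerivAt_eulerProfile n c hr).deriv, eulerProfile]
  simp only [zpow_sub₀ hr', zpow_neg]
  field_simp
  ring

lemma deriv_cexp_mul_ofReal (a : ℂ) :
    deriv (fun t : ℝ => exp (a * t)) = fun t : ℝ => a * exp (a * t) := by
  funext t
  have hexp := (((hasDerivAt_id (t : ℂ)).const_mul a).cexp).comp_ofReal
  simpa [mul_comm] using hexp.deriv

lemma deriv_deriv_cexp_mul_ofReal (a : ℂ) (θ : ℝ) :
    deriv (deriv fun t : ℝ => exp (a * t)) θ = a ^ 2 * exp (a * θ) := by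
  rw [deriv_cexp_mul_ofReal, deriv_const_mul_field', deriv_cexp_mul_ofReal]
  ring

lemma annulus_inner_steklov_iff {r₀ σ : ℝ} {k : ℕ} (h0 : 0 < r₀) (h1 : r₀ < 1) (hk : 0 < k)
    (hkσ : (k : ℝ) + σ ≠ 0) :
    -(k * (r₀ ^ ((k : ℤ) - 1) - (k - σ) / (k + σ) * r₀ ^ (-(k : ℤ) - 1)))
        = σ * (r₀ ^ (k : ℤ) + (k - σ) / (k + σ) * r₀ ^ (-(k : ℤ)))
      ↔ σ ^ 2 - σ * k * ((1 + r₀) / r₀) * ((1 + r₀ ^ (2 * k)) / (1 - r₀ ^ (2 * k)))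
        + (k : ℝ) ^ 2 / r₀ = 0 := by
  have ht : r₀ ^ k < 1 := pow_lt_one₀ h0.le h1 hk.ne'
  have hne : 1 - (r₀ ^ k) ^ 2 ≠ 0 := by nlinarith [pow_pos h0 k]
  rw [zpow_sub₀ h0.ne', zpow_sub₀ h0.ne', zpow_neg, zpow_natCast, zpow_one, mul_comm 2 k,
    pow_mul]
  field_simp
  constructor <;> intro h <;> linear_combination h

lemma polarLaplacian_cexp_mul (a : ℂ) (R : ℝ → ℂ) (r θ : ℝ) :
    deriv (deriv fun s => exp (a * θ) * R s) r
        + 1 / (r : ℂ) * deriv (fun s => exp (a * θ) * R s) r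
        + 1 / (r : ℂ) ^ 2 * deriv (deriv fun t : ℝ => exp (a * t) * R r) θ
      = exp (a * θ) * (deriv (deriv R) r + 1 / (r : ℂ) * deriv R r
          + a ^ 2 / (r : ℂ) ^ 2 * R r) := by
  simp only [deriv_const_mul_field', deriv_mul_const_field', deriv_deriv_cexp_mul_ofReal]
  ring

/-- On the annulus `Ω = B(0,1) \ B(0,r₀) ⊂ ℝ²` (in polar coordinates, with
outward normal `∂_r` at `r = 1` and `-∂_r` at `r = r₀`), the function
`u(r,θ) = e^{ikθ}(r^k + c r^{-k})` with `c = (k-σ)/(k+σ)` is harmonic and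
satisfies the Steklov condition `∂_ν u = σ u` on both boundary circles if and
only if `σ` is a root of
`p_k(σ) = σ² - σ k ((1+r₀)/r₀)((1+r₀^{2k})/(1-r₀^{2k})) + k²/r₀`. -/
theorem annulus_steklov_characterization (r₀ : ℝ) (h0 : 0 < r₀) (h1 : r₀ < 1)
    (k : ℕ) (hk : 0 < k) (σ : ℝ) (hσ : 0 < σ)
    (c : ℝ) (hc : c = ((k : ℝ) - σ) / ((k : ℝ) + σ))
    (u : ℝ → ℝ → ℂ)
    (hu : ∀ r θ : ℝ, u r θ = Complex.exp (Complex.I * k * θ)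
        * ((r : ℂ) ^ (k : ℤ) + (c : ℂ) * (r : ℂ) ^ (-(k : ℤ)))) :
    ((∀ r θ : ℝ, r₀ < r → r < 1 →
        deriv (deriv (fun s => u s θ)) r
          + (1 / (r : ℂ)) * deriv (fun s => u s θ) r
          + (1 / (r : ℂ) ^ 2) * deriv (deriv (fun t => u r t)) θ = 0) ∧
      (∀ θ : ℝ, deriv (fun s => u s θ) 1 = (σ : ℂ) * u 1 θ) ∧
      (∀ θ : ℝ, -deriv (fun s => u s θ) r₀ = (σ : ℂ) * u r₀ θ))
    ↔ σ ^ 2 - σ * k * ((1 + r₀) / r₀) * ((1 + r₀ ^ (2 * k)) / (1 - r₀ ^ (2 * k)))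
        + (k : ℝ) ^ 2 / r₀ = 0 := by
  obtain rfl : u = fun r (θ : ℝ) => exp (I * k * θ) * eulerProfile k c r :=
    funext fun r => funext (hu r)
  have hkσ : (k : ℝ) + σ ≠ 0 := by positivity
  refine (and_iff_right ?harmonic).trans ((and_iff_right ?outer).trans ?inner)
  case harmonic =>
    intro r θ hr _
    have hode := eulerProfile_ode k c (h0.trans hr).ne'
    push_cast at hode
    rw [polarLaplacian_cexp_mul, mul_pow, I_sq]
    linear_combination exp (I * k * θ) * hode
  case outer =>
    intro θ
    have hcσ : (k : ℂ) * (1 - c) = σ * (1 + c) := by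
      have hcσ_real : (k : ℝ) * (1 - c) = σ * (1 + c) := by rw [hc]; field_simp; ring
      exact_mod_cast hcσ_real
    rw [deriv_const_mul_field, (hasDerivAt_eulerProfile k c one_ne_zero).deriv]
    simp only [eulerProfile, ofReal_one, one_zpow, mul_one, Int.cast_natCast]
    linear_combination exp (I * k * θ) * hcσ
  case inner =>
    rw [← annulus_inner_steklov_iff h0 h1 hk hkσ, ← hc]
    simp only [deriv_const_mul_field, (hasDerivAt_eulerProfile k c h0.ne').deriv]
    simp only [eulerProfile, ← mul_neg, mul_left_comm (σ : ℂ), mul_right_inj' (exp_ne_zero _),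
      forall_const, ← ofReal_inj]
    push_cast
    exact Iff.rfl
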